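/- Let α, α₁, α₂ ∈ ℝ and let (A_n)_{n≥0} and (b_n)_{n≥0} be real sequences satisfying the stationary nonisospectral Toda system: for all n ≥ 1, 2α + α₁(b_n − b_{n−1}) + α₂(A_{n+1} − A_{n−1} + b_n² − b_{n−1}²) = 0 and α b_n + α₁(A_{n+1} − A_n) + α₂(A_{n+1}(b_{n+1} + b_n) − A_n(b_{n−1} + b_n)) = 0. Then there exist real constants c₁ and d₁ such that for all n ≥ 1: α₂(A_{n+1} + A_n + b_n²) + α₁ b_n + (2n−1)α + c₁ = 0 and A_n(α₂ b_n + α₁)(α₂ b_{n−1} + α₁) − (α₂ A_n + (n−1)α)² − c₁(α₂ A_n + (n−1)α) + d₁ = 0. -/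

import Mathlib

/-!
Write `F n` for the expression in the first relation without `c₁`, and `G n` for the one in the
second relation without `d₁`. The first equation of the system at `n + 1` says precisely that
`F (n + 1) = F n`, so `F` is constant, say `-c₁`. Then
`G (n + 1) - G n = (α₂ b n + α₁) E₂(n) - (α₂ (A (n + 1) - A n) + α) (F n + c₁)`, where `E₂(n)` is
the left side of the second equation, so `G` is constant on `n ≥ 1` as well, say `-d₁`.
-/

theorem Nat.eq_of_forall_ge_succ_eq {β : Type*} {f : ℕ → β} {m : ℕ}
    (h : ∀ n, m ≤ n → f (n + 1) = f n) : ∀ n, m ≤ n → f n = f m := by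
  intro n hn
  induction n, hn using Nat.le_induction with
  | base => rfl
  | succ n hn ih => rw [h n hn, ih]

namespace StationaryToda

variable (α α₁ α₂ : ℝ) (A b : ℕ → ℝ)

def firstIntegral (n : ℕ) : ℝ :=
  α₂ * (A (n + 1) + A n + b n ^ 2) + α₁ * b n + (2 * (n : ℝ) - 1) * α

def secondIntegral (c : ℝ) (n : ℕ) : ℝ :=
  A n * (α₂ * b n + α₁) * (α₂ * b (n - 1) + α₁)
    - (α₂ * A n + ((n : ℝ) - 1) * α) ^ 2
    - c * (α₂ * A n + ((n : ℝ) - 1) * α)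

variable {α α₁ α₂ A b}

theorem firstIntegral_succ {n : ℕ}
    (h : 2 * α + α₁ * (b (n + 1) - b n)
      + α₂ * (A (n + 2) - A n + b (n + 1) ^ 2 - b n ^ 2) = 0) :
    firstIntegral α α₁ α₂ A b (n + 1) = firstIntegral α α₁ α₂ A b n := by
  unfold firstIntegral
  push_cast
  linear_combination h

theorem secondIntegral_succ {n : ℕ} {c : ℝ}
    (h : α * b (n + 1) + α₁ * (A (n + 2) - A (n + 1))
      + α₂ * (A (n + 2) * (b (n + 2) + b (n + 1)) - A (n + 1) * (b n + b (n + 1))) = 0)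
    (hc : firstIntegral α α₁ α₂ A b (n + 1) + c = 0) :
    secondIntegral α α₁ α₂ A b c (n + 2) = secondIntegral α α₁ α₂ A b c (n + 1) := by
  unfold secondIntegral
  unfold firstIntegral at hc
  simp only [Nat.add_sub_cancel]
  push_cast at hc ⊢
  linear_combination (α₂ * b (n + 1) + α₁) * h - (α₂ * (A (n + 2) - A (n + 1)) + α) * hc

end StationaryToda

open StationaryToda in
theorem stationary_toda_first_integrals
    (α α₁ α₂ : ℝ) (A b : ℕ → ℝ)
    (h1 : ∀ n : ℕ, 1 ≤ n →
      2 * α + α₁ * (b n - b (n - 1))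
        + α₂ * (A (n + 1) - A (n - 1) + (b n) ^ 2 - (b (n - 1)) ^ 2) = 0)
    (h2 : ∀ n : ℕ, 1 ≤ n →
      α * b n + α₁ * (A (n + 1) - A n)
        + α₂ * (A (n + 1) * (b (n + 1) + b n) - A n * (b (n - 1) + b n)) = 0) :
    ∃ c₁ d₁ : ℝ, ∀ n : ℕ, 1 ≤ n →
      (α₂ * (A (n + 1) + A n + (b n) ^ 2) + α₁ * b n + (2 * (n : ℝ) - 1) * α + c₁ = 0) ∧
      (A n * (α₂ * b n + α₁) * (α₂ * b (n - 1) + α₁)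
        - (α₂ * A n + ((n : ℝ) - 1) * α) ^ 2
        - c₁ * (α₂ * A n + ((n : ℝ) - 1) * α) + d₁ = 0) := by
  set F := firstIntegral α α₁ α₂ A b
  set G := secondIntegral α α₁ α₂ A b (-F 0)
  have hF : ∀ n, 0 ≤ n → F n = F 0 :=
    Nat.eq_of_forall_ge_succ_eq fun n _ ↦ firstIntegral_succ (by simpa using h1 (n + 1))
  have hG : ∀ n, 1 ≤ n → G n = G 1 := by
    refine Nat.eq_of_forall_ge_succ_eq fun n hn ↦ ?_
    obtain ⟨k, rfl⟩ := Nat.exists_eq_add_of_le' hn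
    exact secondIntegral_succ (by simpa using h2 (k + 1) (by omega))
      (add_neg_eq_zero.mpr (hF (k + 1) (Nat.zero_le _)))
  exact ⟨-F 0, -G 1, fun n hn ↦
    ⟨add_neg_eq_zero.mpr (hF n n.zero_le), add_neg_eq_zero.mpr (hG n hn)⟩⟩
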